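/- For fixed K, α, β, γ, σ², p, δ > 0, the function g(M, N) = log₂(1 + (p(M−K)/σ²)·(Nαβ/(δ+1) + γ)) satisfies g(M, N) − log₂(M·N) → log₂(p·α·β/(σ²(δ+1))) as M, N → ∞, i.e., the rate grows like log₂(MN) plus a bounded constant. -/
import Mathlib

open Filter

theorem rate_scaling_logMN
    (p σ2 α β γ δ : ℝ) (hp : 0 < p) (hσ : 0 < σ2) (hα : 0 < α)
    (hβ : 0 < β) (hγ : 0 < γ) (hδ : 0 < δ) (K : ℕ) :
    Tendsto
      (fun n : ℕ =>
        Real.logb 2 (1 + (p * ((n : ℝ) - K) / σ2) * ((n : ℝ) * α * β / (δ + 1) + γ)) -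
          Real.logb 2 ((n : ℝ) * (n : ℝ)))
      atTop (nhds (Real.logb 2 (p * α * β / (σ2 * (δ + 1))))) := by
  set c : ℝ := p * α * β / (σ2 * (δ + 1)) with hc
  have hc0 : 0 < c := by positivity
  have hnat : Tendsto (fun n : ℕ => (n : ℝ)) atTop atTop := tendsto_natCast_atTop_atTop
  have hinv : Tendsto (fun n : ℕ => ((n : ℝ))⁻¹) atTop (nhds 0) :=
    tendsto_inv_atTop_zero.comp hnat
  -- the ratio tends to c
  have hratio : Tendsto
      (fun n : ℕ =>
        (1 + (p * ((n : ℝ) - K) / σ2) * ((n : ℝ) * α * β / (δ + 1) + γ)) /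
          ((n : ℝ) * (n : ℝ))) atTop (nhds c) := by
    have h1 : Tendsto
        (fun n : ℕ =>
          ((n : ℝ))⁻¹ * ((n : ℝ))⁻¹ +
            (p / σ2) * (1 - (K : ℝ) * ((n : ℝ))⁻¹) * (α * β / (δ + 1) + γ * ((n : ℝ))⁻¹))
        atTop (nhds ((0 : ℝ) * 0 + (p / σ2) * (1 - (K : ℝ) * 0) * (α * β / (δ + 1) + γ * 0))) := by
      exact (hinv.mul hinv).add
        (((tendsto_const_nhds.sub (tendsto_const_nhds.mul hinv)).const_mul (p / σ2)).mul
          (tendsto_const_nhds.add (tendsto_const_nhds.mul hinv)))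
    have heq : (0 : ℝ) * 0 + (p / σ2) * (1 - (K : ℝ) * 0) * (α * β / (δ + 1) + γ * 0) = c := by
      rw [hc]; field_simp; ring
    rw [heq] at h1
    refine h1.congr' ?_
    filter_upwards [eventually_ge_atTop 1] with n hn
    have hn0 : (0 : ℝ) < (n : ℝ) := by exact_mod_cast Nat.lt_of_lt_of_le Nat.zero_lt_one hn
    have hne : (n : ℝ) ≠ 0 := ne_of_gt hn0
    field_simp
  -- continuity of logb at c
  have hlogb : Tendsto (fun x : ℝ => Real.logb 2 x) (nhds c) (nhds (Real.logb 2 c)) :=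
    (Real.continuousAt_logb (ne_of_gt hc0)).tendsto
  have h2 := hlogb.comp hratio
  refine h2.congr' ?_
  filter_upwards [eventually_ge_atTop (K + 1)] with n hn
  have hnK : (K : ℝ) < (n : ℝ) := by exact_mod_cast Nat.lt_of_lt_of_le (Nat.lt_succ_self K) hn
  have hn0 : (0 : ℝ) < (n : ℝ) := lt_of_le_of_lt (Nat.cast_nonneg K) hnK
  have hx : (0 : ℝ) < 1 + (p * ((n : ℝ) - K) / σ2) * ((n : ℝ) * α * β / (δ + 1) + γ) := by
    have h1 : (0 : ℝ) < (n : ℝ) - K := sub_pos.mpr hnK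
    positivity
  simp only [Function.comp]
  rw [Real.logb_div (ne_of_gt hx) (by positivity)]
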